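/- arXiv:quant-ph/0206089 — 8 statements merged into one kernel-verified Lean document; each statement's English description precedes it below -/
import Mathlib

section
/- For any functions a, b : Bool → Bool, the number of input pairs (x, y) ∈ Bool × Bool such that xor (a x) (b y) = (x && y) is at most 3. Moreover, this bound is attained: for the constant strategy a ≡ false, b ≡ false, the equation xor (a x) (b y) = (x && y) holds for exactly 3 of the 4 input pairs. -/
theorem chsh_deterministic_bound :
    (∀ a b : Bool → Bool,
      (Finset.univ.filter (fun p : Bool × Bool =>
        xor (a p.1) (b p.2) = (p.1 && p.2))).card ≤ 3) ∧
    (Finset.univ.filter (fun p : Bool × Bool =>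
        xor ((fun _ => false) p.1) ((fun _ => false) p.2) = (p.1 && p.2))).card = 3 := by
  constructor
  · intro a b
    by_contra h
    push_neg at h
    have hcard : Fintype.card (Bool × Bool) = 4 := by decide
    have hfull : (Finset.univ.filter (fun p : Bool × Bool =>
        xor (a p.1) (b p.2) = (p.1 && p.2))) = Finset.univ := by
      apply Finset.eq_univ_of_card
      have hle := Finset.card_filter_le (Finset.univ : Finset (Bool × Bool))
        (fun p : Bool × Bool => xor (a p.1) (b p.2) = (p.1 && p.2))
      rw [Finset.card_univ] at hle
      omega
    have hall : ∀ p : Bool × Bool, xor (a p.1) (b p.2) = (p.1 && p.2) := by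
      intro p
      have := hfull ▸ Finset.mem_univ p
      simpa using (Finset.mem_filter.mp this).2
    have h00 := hall (false, false)
    have h01 := hall (false, true)
    have h10 := hall (true, false)
    have h11 := hall (true, true)
    simp only at h00 h01 h10 h11
    revert h00 h01 h10 h11
    rcases a true <;> rcases a false <;> rcases b true <;> rcases b false <;> decide
  · decide
end

section
/- Let Λ be a finite type and let μ : Λ → ℝ≥0 be a probability mass function (∑_λ μ(λ) = 1). For any strategies a, b : Bool → Λ → Bool, the success probability (1/4) · ∑_{x ∈ Bool} ∑_{y ∈ Bool} ∑_{λ ∈ Λ} μ(λ) · (indicator that xor (a x λ) (b y λ) = (x && y)) is at most 3/4. -/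
theorem chsh_lhv_bound (Λ : Type*) [Fintype Λ] (μ : Λ → NNReal)
    (hμ : ∑ l : Λ, μ l = 1) (a b : Bool → Λ → Bool) :
    (1 / 4 : NNReal) * ∑ x : Bool, ∑ y : Bool, ∑ l : Λ,
        μ l * (if xor (a x l) (b y l) = (x && y) then 1 else 0)
      ≤ 3 / 4 := by
  have hre : (∑ x : Bool, ∑ y : Bool, ∑ l : Λ,
      μ l * (if xor (a x l) (b y l) = (x && y) then (1:NNReal) else 0))
      = ∑ l : Λ, μ l * ∑ x : Bool, ∑ y : Bool,
        (if xor (a x l) (b y l) = (x && y) then (1:NNReal) else 0) := by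
    simp only [Finset.mul_sum]
    conv_lhs => enter [2, x]; rw [Finset.sum_comm]
    rw [Finset.sum_comm]
  have key : ∀ l : Λ, (∑ x : Bool, ∑ y : Bool,
      (if xor (a x l) (b y l) = (x && y) then (1:NNReal) else 0)) ≤ 3 := by
    intro l
    simp only [Fintype.sum_bool]
    cases h1 : a false l <;> cases h2 : a true l <;> cases h3 : b false l <;>
      cases h4 : b true l <;> simp [h1, h2, h3, h4] <;> norm_num
  rw [hre]
  calc (1 / 4 : NNReal) * ∑ l : Λ, μ l * ∑ x : Bool, ∑ y : Bool,
        (if xor (a x l) (b y l) = (x && y) then (1:NNReal) else 0)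
      ≤ (1 / 4 : NNReal) * ∑ l : Λ, μ l * 3 := by
        gcongr with l
        exact key l
    _ = 3 / 4 := by
        rw [← Finset.sum_mul, hμ, one_mul]
        rw [div_eq_mul_inv, div_eq_mul_inv, one_mul, mul_comm]
end

section
/- Define θ_A : Bool → ℝ by θ_A(false) = 0, θ_A(true) = π/8, and θ_B : Bool → ℝ by θ_B(false) = 0, θ_B(true) = −π/8. For an angle θ and an outcome bit a ∈ Bool, let u(θ, a) : Fin 2 → ℝ be the unit vector with u(θ,a)(0) = cos(θ + a·π/2) and u(θ,a)(1) = sin(θ + a·π/2), and let ψ : Fin 2 × Fin 2 → ℝ be the vector with ψ(i,j) = 1/√2 if i = j and 0 otherwise. Then (1/4) · ∑_{x,y ∈ Bool} ∑_{a,b ∈ Bool with xor a b = (x && y)} ( ∑_{i,j ∈ Fin 2} u(θ_A(x), a)(i) · u(θ_B(y), b)(j) · ψ(i,j) )² = (5 + √2)/8. -/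
noncomputable def thetaA : Bool → ℝ := fun x => if x then Real.pi / 8 else 0

noncomputable def thetaB : Bool → ℝ := fun y => if y then -(Real.pi / 8) else 0

noncomputable def u (θ : ℝ) (a : Bool) : Fin 2 → ℝ :=
  fun i => if i = 0 then Real.cos (θ + (if a then 1 else 0) * (Real.pi / 2))
           else Real.sin (θ + (if a then 1 else 0) * (Real.pi / 2))

noncomputable def ψ : Fin 2 × Fin 2 → ℝ :=
  fun p => if p.1 = p.2 then 1 / Real.sqrt 2 else 0

/-!
Measuring the Bell state in the bases rotated by `α` and `β` gives the amplitude
`cos (α - β) / √2` for equal outcomes and `± sin (α - β) / √2` for different ones, so on inputs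
`(x, y)` the players win with probability `cos² (θ_A x - θ_B y)`, or `sin² (θ_A x - θ_B y)` when
`x = y = true`. The angle differences are `0, π/8, π/8, π/4`, giving
`(1 + 2 cos² (π/8) + sin² (π/4)) / 4 = (5 + √2) / 8`.
-/

open Real

lemma u_eq_u_false (θ : ℝ) (a : Bool) :
    u θ a = u (θ + (if a then 1 else 0) * (π / 2)) false := by
  ext i; simp [u]

lemma amplitude_false_false (α β : ℝ) :
    ∑ i : Fin 2, ∑ j : Fin 2, u α false i * u β false j * ψ (i, j) = cos (α - β) / √2 := by
  simp [Fin.sum_univ_two, u, ψ, cos_sub]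
  ring

lemma sq_amplitude (α β : ℝ) (a b : Bool) :
    (∑ i : Fin 2, ∑ j : Fin 2, u α a i * u β b j * ψ (i, j)) ^ 2 =
      (if a = b then cos (α - β) ^ 2 else sin (α - β) ^ 2) / 2 := by
  rw [u_eq_u_false α, u_eq_u_false β, amplitude_false_false, div_pow, sq_sqrt zero_le_two]
  cases a <;> cases b <;>
    simp [sub_add_eq_sub_sub, add_sub_right_comm, cos_sub_pi_div_two, cos_add_pi_div_two]

lemma success_probability_eq (α β : ℝ) (c : Bool) :
    ∑ a : Bool, ∑ b : Bool,
        (if xor a b = c then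
          (∑ i : Fin 2, ∑ j : Fin 2, u α a i * u β b j * ψ (i, j)) ^ 2 else 0) =
      if c then sin (α - β) ^ 2 else cos (α - β) ^ 2 := by
  simp only [sq_amplitude]
  cases c <;> simp [mul_div_cancel₀]

theorem chsh_quantum_value :
    (1 / 4 : ℝ) * ∑ x : Bool, ∑ y : Bool, ∑ a : Bool, ∑ b : Bool,
        (if xor a b = (x && y) then
          (∑ i : Fin 2, ∑ j : Fin 2, u (thetaA x) a i * u (thetaB y) b j * ψ (i, j)) ^ 2
         else 0)
      = (5 + Real.sqrt 2) / 8 := by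
  simp_rw [success_probability_eq]
  simp only [Fintype.sum_bool, thetaA, thetaB]
  norm_num [show π / 8 + π / 8 = π / 4 by ring, div_pow]
  rw [sq_sqrt (by positivity)]
  ring
end

section
/- There do not exist functions a, b, c : Bool → Bool such that for every triple (x, y, z) ∈ Bool × Bool × Bool satisfying xor x (xor y z) = false, it holds that xor (a x) (xor (b y) (c z)) = (x || y || z). -/
theorem ghz_no_perfect_deterministic_strategy :
    ¬ ∃ a b c : Bool → Bool, ∀ x y z : Bool,
        xor x (xor y z) = false →
        xor (a x) (xor (b y) (c z)) = (x || y || z) := by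
  rintro ⟨a, b, c, h⟩
  have h1 := h false false false rfl
  have h2 := h false true true rfl
  have h3 := h true false true rfl
  have h4 := h true true false rfl
  revert h1 h2 h3 h4
  cases a false <;> cases a true <;> cases b false <;> cases b true <;>
    cases c false <;> cases c true <;> simp
end

section
/- For any functions a, b, c : Bool → Bool, the number of triples (x, y, z) ∈ Bool × Bool × Bool satisfying both xor x (xor y z) = false and xor (a x) (xor (b y) (c z)) = (x || y || z) is at most 3. -/
theorem ghz_deterministic_at_most_three (a b c : Bool → Bool) :
    (Finset.univ.filter (fun p : Bool × Bool × Bool =>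
        xor p.1 (xor p.2.1 p.2.2) = false ∧
        xor (a p.1) (xor (b p.2.1) (c p.2.2)) = (p.1 || p.2.1 || p.2.2))).card ≤ 3 := by
  set S := (Finset.univ.filter (fun p : Bool × Bool × Bool =>
        xor p.1 (xor p.2.1 p.2.2) = false ∧
        xor (a p.1) (xor (b p.2.1) (c p.2.2)) = (p.1 || p.2.1 || p.2.2))) with hS
  by_contra h
  push_neg at h
  have hsub : S ⊆ ({(false,false,false),(false,true,true),(true,false,true),(true,true,false)} :
      Finset (Bool × Bool × Bool)) := by
    intro p hp
    rw [hS, Finset.mem_filter] at hp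
    obtain ⟨x, y, z⟩ := p
    obtain ⟨_, h1, _⟩ := hp
    simp only [Finset.mem_insert, Finset.mem_singleton]
    revert h1
    rcases x <;> rcases y <;> rcases z <;> simp
  have hcard : ({(false,false,false),(false,true,true),(true,false,true),(true,true,false)} :
      Finset (Bool × Bool × Bool)).card ≤ 4 := by decide
  have heq : S = ({(false,false,false),(false,true,true),(true,false,true),(true,true,false)} :
      Finset (Bool × Bool × Bool)) :=
    Finset.eq_of_subset_of_card_le hsub (le_trans hcard h)
  have m1 : ((false,false,false) : Bool × Bool × Bool) ∈ S := by rw [heq]; decide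
  have m2 : ((false,true,true) : Bool × Bool × Bool) ∈ S := by rw [heq]; decide
  have m3 : ((true,false,true) : Bool × Bool × Bool) ∈ S := by rw [heq]; decide
  have m4 : ((true,true,false) : Bool × Bool × Bool) ∈ S := by rw [heq]; decide
  rw [hS, Finset.mem_filter] at m1 m2 m3 m4
  obtain ⟨-, -, e1⟩ := m1
  obtain ⟨-, -, e2⟩ := m2
  obtain ⟨-, -, e3⟩ := m3
  obtain ⟨-, -, e4⟩ := m4
  simp only at e1 e2 e3 e4
  rcases Bool.dichotomy (a true) with h1 | h1 <;>
  rcases Bool.dichotomy (a false) with h2 | h2 <;>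
  rcases Bool.dichotomy (b true) with h3 | h3 <;>
  rcases Bool.dichotomy (b false) with h4 | h4 <;>
  rcases Bool.dichotomy (c true) with h5 | h5 <;>
  rcases Bool.dichotomy (c false) with h6 | h6 <;>
  simp_all
end

section
/- Let Λ be a finite type and let μ : Λ → ℝ≥0 be a probability mass function (∑_λ μ(λ) = 1). For any strategies a, b, c : Bool → Λ → Bool, the success probability (1/4) · ∑_{(x,y,z) ∈ Bool³ with xor x (xor y z) = false} ∑_{λ ∈ Λ} μ(λ) · (indicator that xor (a x λ) (xor (b y λ) (c z λ)) = (x || y || z)) is at most 3/4. -/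
lemma ghz_pointwise (A B C : Bool → Bool) :
    (∑ p ∈ Finset.univ.filter (fun p : Bool × Bool × Bool =>
        xor p.1 (xor p.2.1 p.2.2) = false),
      (if xor (A p.1) (xor (B p.2.1) (C p.2.2)) = (p.1 || p.2.1 || p.2.2)
       then (1 : NNReal) else 0)) ≤ 3 := by
  have hfilter : (Finset.univ.filter (fun p : Bool × Bool × Bool =>
      xor p.1 (xor p.2.1 p.2.2) = false)) =
      {(false, false, false), (false, true, true), (true, false, true),
        (true, true, false)} := by decide
  rw [hfilter]
  have hnot : ¬ ((xor (A false) (xor (B false) (C false)) = false) ∧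
      (xor (A false) (xor (B true) (C true)) = true) ∧
      (xor (A true) (xor (B false) (C true)) = true) ∧
      (xor (A true) (xor (B true) (C false)) = true)) := by
    cases h1 : A true <;> cases h2 : A false <;> cases h3 : B true <;>
      cases h4 : B false <;> cases h5 : C true <;> cases h6 : C false <;>
      simp [h1, h2, h3, h4, h5, h6]
  rw [show ({(false, false, false), (false, true, true), (true, false, true),
      (true, true, false)} : Finset (Bool × Bool × Bool)) =
      {(false, false, false), (false, true, true), (true, false, true),
        (true, true, false)} from rfl]
  rw [Finset.sum_insert (by decide), Finset.sum_insert (by decide),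
    Finset.sum_insert (by decide), Finset.sum_singleton]
  push_neg at hnot
  split_ifs with h1 h2 h3 h4 <;> simp_all <;> norm_num

theorem ghz_lhv_bound (Λ : Type*) [Fintype Λ] (μ : Λ → NNReal)
    (hμ : ∑ l : Λ, μ l = 1) (a b c : Bool → Λ → Bool) :
    (1 / 4 : NNReal) *
      ∑ p ∈ Finset.univ.filter (fun p : Bool × Bool × Bool =>
          xor p.1 (xor p.2.1 p.2.2) = false),
        ∑ l : Λ, μ l *
          (if xor (a p.1 l) (xor (b p.2.1 l) (c p.2.2 l)) = (p.1 || p.2.1 || p.2.2)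
           then 1 else 0)
      ≤ 3 / 4 := by
  rw [Finset.sum_comm]
  have hb : ∑ l : Λ, ∑ p ∈ Finset.univ.filter (fun p : Bool × Bool × Bool =>
      xor p.1 (xor p.2.1 p.2.2) = false),
      μ l * (if xor (a p.1 l) (xor (b p.2.1 l) (c p.2.2 l)) = (p.1 || p.2.1 || p.2.2)
        then 1 else 0) ≤ 3 := by
    calc _ ≤ ∑ l : Λ, μ l * 3 := by
          refine Finset.sum_le_sum fun l _ => ?_
          rw [← Finset.mul_sum]
          exact mul_le_mul_right (ghz_pointwise (fun x => a x l) (fun x => b x l)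
            (fun x => c x l)) (μ l)
      _ = 3 := by rw [← Finset.sum_mul, hμ, one_mul]
  calc (1 / 4 : NNReal) * _ ≤ (1 / 4 : NNReal) * 3 := mul_le_mul_right hb _
    _ = 3 / 4 := by norm_num [div_eq_mul_inv]
end

section
/- Let Λ be a finite type and let μ : Λ → ℝ≥0 be a probability mass function (∑_λ μ(λ) = 1). Let y_A¹, y_B¹, y_A², y_B² : Bool → Bool → Λ → Bool be functions (outputs under two sequences of updates, as functions of x_A, x_B, and the randomness λ). Suppose: (i) y_A¹ does not depend on its second argument, i.e. y_A¹(x_A, x_B, λ) = y_A¹(x_A, x_B', λ) for all x_A, x_B, x_B', λ; (ii) y_B² does not depend on its first argument, i.e. y_B²(x_A, x_B, λ) = y_B²(x_A', x_B, λ) for all x_A, x_A', x_B, λ; and (iii) the success probability (1/4) · ∑_{x_A, x_B ∈ Bool} ∑_{λ ∈ Λ} μ(λ) · (indicator that xor (y_A¹ x_A x_B λ) (y_B¹ x_A x_B λ) = (x_A && x_B)) is strictly greater than 3/4. Then there exist x_A, x_B ∈ Bool and λ ∈ Λ with μ(λ) > 0 such that y_A¹(x_A, x_B, λ) ≠ y_A²(x_A,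 x_B, λ) or y_B¹(x_A, x_B, λ) ≠ y_B²(x_A, x_B, λ). -/
/-!
If every run with positive weight gives the same outputs under both update sequences, then on the
support of `μ` Bob's output under the first sequence agrees with his output under the second, which
ignores `x_A`; Alice's output under the first sequence ignores `x_B` anyway. The first sequence is
then a local hidden-variable strategy, and these win the CHSH game with probability at most `3/4`.
-/

open Finset

noncomputable def chshScore (yA yB : Bool → Bool → Bool) : NNReal :=
  ∑ xA : Bool, ∑ xB : Bool, if xor (yA xA xB) (yB xA xB) = (xA && xB) then 1 else 0

/- For local outputs `a xA`, `b xB`, the xor of the four winning conditions `a xA ⊕ b xB = xA ∧ xB`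
reads `false = true`, so at least one input pair is lost. -/
theorem chshScore_le_three {yA yB : Bool → Bool → Bool}
    (hA : ∀ xA xB xB', yA xA xB = yA xA xB') (hB : ∀ xA xA' xB, yB xA xB = yB xA' xB) :
    chshScore yA yB ≤ 3 := by
  have hlocal : chshScore yA yB = chshScore (fun xA _ => yA xA true) (fun _ xB => yB true xB) := by
    refine sum_congr rfl fun xA _ => sum_congr rfl fun xB _ => ?_
    rw [hA xA xB true, hB xA true xB]
  rw [hlocal, chshScore, Fintype.sum_bool, Fintype.sum_bool, Fintype.sum_bool]
  cases yA true true <;> cases yA false true <;> cases yB true true <;> cases yB true false <;>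
    norm_num

theorem sum_sum_sum_mul_ite_eq_sum_mul_chshScore {Λ : Type*} [Fintype Λ] (μ : Λ → NNReal)
    (yA yB : Bool → Bool → Λ → Bool) :
    ∑ xA : Bool, ∑ xB : Bool, ∑ l : Λ,
        μ l * (if xor (yA xA xB l) (yB xA xB l) = (xA && xB) then 1 else 0) =
      ∑ l : Λ, μ l * chshScore (yA · · l) (yB · · l) := by
  simp only [chshScore, mul_sum]
  exact (sum_congr rfl fun _ _ => sum_comm).trans sum_comm

theorem chsh_success_le_three_quarters {Λ : Type*} [Fintype Λ] (μ : Λ → NNReal)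
    (hμ : ∑ l : Λ, μ l ≤ 1) (yA yB : Bool → Bool → Λ → Bool)
    (hA : ∀ xA xB xB' l, 0 < μ l → yA xA xB l = yA xA xB' l)
    (hB : ∀ xA xA' xB l, 0 < μ l → yB xA xB l = yB xA' xB l) :
    (1 / 4 : NNReal) * ∑ xA : Bool, ∑ xB : Bool, ∑ l : Λ,
        μ l * (if xor (yA xA xB l) (yB xA xB l) = (xA && xB) then 1 else 0) ≤ 3 / 4 := by
  have hterm : ∀ l, μ l * chshScore (yA · · l) (yB · · l) ≤ μ l * 3 := by
    intro l
    rcases eq_zero_or_pos (μ l) with hzero | hpos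
    · simp [hzero]
    · exact mul_le_mul_right (chshScore_le_three (hA · · · l hpos) (hB · · · l hpos)) _
  have hsum : ∑ l : Λ, μ l * chshScore (yA · · l) (yB · · l) ≤ 3 :=
    calc ∑ l : Λ, μ l * chshScore (yA · · l) (yB · · l)
        ≤ ∑ l : Λ, μ l * 3 := sum_le_sum fun l _ => hterm l
      _ = (∑ l : Λ, μ l) * 3 := (sum_mul _ _ _).symm
      _ ≤ 1 * 3 := mul_le_mul_left hμ _
      _ = 3 := one_mul 3
  rw [sum_sum_sum_mul_ite_eq_sum_mul_chshScore]
  calc (1 / 4 : NNReal) * ∑ l : Λ, μ l * chshScore (yA · · l) (yB · · l)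
      ≤ 1 / 4 * 3 := mul_le_mul_right hsum _
    _ = 3 / 4 := by rw [div_mul_eq_mul_div, one_mul]

theorem bell_violation_breaks_causal_invariance
    (Λ : Type*) [Fintype Λ] (μ : Λ → NNReal) (hμ : ∑ l : Λ, μ l = 1)
    (yA1 yB1 yA2 yB2 : Bool → Bool → Λ → Bool)
    (h1 : ∀ xA xB xB' l, yA1 xA xB l = yA1 xA xB' l)
    (h2 : ∀ xA xA' xB l, yB2 xA xB l = yB2 xA' xB l)
    (h3 : (3 / 4 : NNReal) <
      (1 / 4 : NNReal) * ∑ xA : Bool, ∑ xB : Bool, ∑ l : Λ,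
        μ l * (if xor (yA1 xA xB l) (yB1 xA xB l) = (xA && xB) then 1 else 0)) :
    ∃ (xA xB : Bool) (l : Λ), 0 < μ l ∧
      (yA1 xA xB l ≠ yA2 xA xB l ∨ yB1 xA xB l ≠ yB2 xA xB l) := by
  by_contra hinvariant
  push Not at hinvariant
  have hB1 : ∀ xA xA' xB l, 0 < μ l → yB1 xA xB l = yB1 xA' xB l := fun xA xA' xB l hpos => by
    rw [(hinvariant xA xB l hpos).2, (hinvariant xA' xB l hpos).2, h2 xA xA' xB l]
  exact (chsh_success_le_three_quarters μ hμ.le yA1 yB1 (fun xA xB xB' l _ => h1 xA xB xB' l)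
    hB1).not_gt h3
end

section
/- Let Λ be a finite type and let μ : Λ → ℝ≥0 be a probability mass function. Then there do not exist f_A, f_B : Bool → Λ → Bool such that the success probability (1/4) · ∑_{x_A, x_B ∈ Bool} ∑_{λ ∈ Λ} μ(λ) · (indicator that xor (f_A x_A λ) (f_B x_B λ) = (x_A && x_B)) is strictly greater than 3/4. -/
theorem no_lhv_strategy_exceeds_three_quarters
    (Λ : Type*) [Fintype Λ] (μ : Λ → NNReal) (hμ : ∑ l : Λ, μ l = 1) :
    ¬ ∃ fA fB : Bool → Λ → Bool,
      (3 / 4 : NNReal) <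
        (1 / 4 : NNReal) * ∑ xA : Bool, ∑ xB : Bool, ∑ l : Λ,
          μ l * (if xor (fA xA l) (fB xB l) = (xA && xB) then 1 else 0) := by
  rintro ⟨fA, fB, h⟩
  have key : ∀ l : Λ,
      (∑ xA : Bool, ∑ xB : Bool,
        (if xor (fA xA l) (fB xB l) = (xA && xB) then (1 : NNReal) else 0)) ≤ 3 := by
    intro l
    simp only [Fintype.sum_bool]
    rcases hfa : fA true l <;> rcases hfa' : fA false l <;>
      rcases hfb : fB true l <;> rcases hfb' : fB false l <;> norm_num
  have htotal :
      (∑ xA : Bool, ∑ xB : Bool, ∑ l : Λ,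
        μ l * (if xor (fA xA l) (fB xB l) = (xA && xB) then (1 : NNReal) else 0)) ≤ 3 := by
    calc (∑ xA : Bool, ∑ xB : Bool, ∑ l : Λ,
          μ l * (if xor (fA xA l) (fB xB l) = (xA && xB) then (1 : NNReal) else 0))
        = ∑ l : Λ, μ l * (∑ xA : Bool, ∑ xB : Bool,
            (if xor (fA xA l) (fB xB l) = (xA && xB) then (1 : NNReal) else 0)) := by
          simp only [Fintype.sum_bool, mul_add, Finset.sum_add_distrib]
      _ ≤ ∑ l : Λ, μ l * 3 := by
          exact Finset.sum_le_sum fun l _ => mul_le_mul_right (key l) (μ l)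
      _ = 3 := by rw [← Finset.sum_mul, hμ, one_mul]
  have : (1 / 4 : NNReal) * _ ≤ (1 / 4 : NNReal) * 3 := mul_le_mul_right htotal _
  have h34 : (1 / 4 : NNReal) * 3 = 3 / 4 := by
    rw [div_mul_eq_mul_div, one_mul]
  exact absurd (lt_of_lt_of_le h (h34 ▸ this)) (lt_irrefl _)
end
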